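/- arXiv:2201.03702 — 3 statements merged into one kernel-verified Lean document; each statement's English description precedes it below -/
import Mathlib

section
/- Let A₁ and A₂ be entailed sets of two hypotheses with A₂ ⊆ A₁ (A₂ is a specialization of A₁) and tn(A₁) = tn(A₂). Then for every set C of examples, S_ACC(A₁ ∪ C) ≥ S_ACC(A₂ ∪ C); in fact tn(A₁ ∪ C) = tn(A₂ ∪ C) and tp(A₁ ∪ C) ≥ tp(A₂ ∪ C). (Constructive witness in the proof of the specialization extension constraint.) -/
open Finset

variable {α : Type*}

/-- True positives: examples entailed by the hypothesis that are positive. -/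
def tp [DecidableEq α] (Ep A : Finset α) : ℕ := (A ∩ Ep).card

/-- True negatives: negative examples not entailed by the hypothesis. -/
def tn [DecidableEq α] (En A : Finset α) : ℕ := (En \ A).card

/-- False negatives: positive examples not entailed by the hypothesis. -/
def fnScore [DecidableEq α] (Ep A : Finset α) : ℕ := (Ep \ A).card

/-- False positives: negative examples entailed by the hypothesis. -/
def fpScore [DecidableEq α] (En A : Finset α) : ℕ := (A ∩ En).card

/-- Accuracy score. -/
def sAcc [DecidableEq α] (Ep En A : Finset α) : ℕ := tp Ep A + tn En A

/-- MDL score: accuracy minus hypothesis size, as an integer. -/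
def sMdl [DecidableEq α] (Ep En A : Finset α) (s : ℕ) : ℤ := (tp Ep A + tn En A : ℤ) - s

theorem Finset.sdiff_eq_sdiff_of_subset_of_card_eq {s t u : Finset α} [DecidableEq α] (htu : t ⊆ u)
    (hcard : #(s \ u) = #(s \ t)) : s \ u = s \ t :=
  eq_of_subset_of_card_le (sdiff_subset_sdiff Subset.rfl htu) hcard.ge

theorem tn_union_eq_of_sdiff_eq [DecidableEq α] {En A1 A2 : Finset α} (h : En \ A1 = En \ A2)
    (C : Finset α) : tn En (A1 ∪ C) = tn En (A2 ∪ C) := by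
  simp only [tn, sdiff_union_distrib, h]

theorem tp_mono [DecidableEq α] (Ep : Finset α) : Monotone (tp Ep) :=
  fun _ _ hAB => card_le_card (inter_subset_inter_right hAB)

theorem acc_specialization_extension_witness [DecidableEq α] (Ep En A1 A2 : Finset α)
    (hspec : A2 ⊆ A1) (htn : tn En A1 = tn En A2) (C : Finset α) :
    sAcc Ep En (A1 ∪ C) ≥ sAcc Ep En (A2 ∪ C) ∧
      tn En (A1 ∪ C) = tn En (A2 ∪ C) ∧
      tp Ep (A1 ∪ C) ≥ tp Ep (A2 ∪ C) := by
  have hneg : En \ A1 = En \ A2 := Finset.sdiff_eq_sdiff_of_subset_of_card_eq hspec htn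
  have htn' : tn En (A1 ∪ C) = tn En (A2 ∪ C) := tn_union_eq_of_sdiff_eq hneg C
  have htp : tp Ep (A2 ∪ C) ≤ tp Ep (A1 ∪ C) := tp_mono Ep (union_subset_union_left hspec)
  exact ⟨Nat.add_le_add htp htn'.ge, htn', htp⟩
end

section
/- If a hypothesis with entailed set A is complete, i.e., tp(A) = |E⁺| (equivalently E⁺ ⊆ A), then every generalization A' of A (A ⊆ A') satisfies S_ACC(A) ≥ S_ACC(A'). (Generalizations of a complete hypothesis are never more accurate.) -/
open Finset

variable {α : Type*}

theorem tp_le_card [DecidableEq α] (Ep A : Finset α) : tp Ep A ≤ Ep.card :=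
  card_le_card inter_subset_right

theorem tn_antitone [DecidableEq α] (En : Finset α) : Antitone (tn En) :=
  fun _ _ hAA' => card_le_card (sdiff_subset_sdiff le_rfl hAA')

theorem complete_generalizations_not_better [DecidableEq α] (Ep En A A' : Finset α)
    (hcomplete : tp Ep A = Ep.card) (hgen : A ⊆ A') :
    sAcc Ep En A ≥ sAcc Ep En A' :=
  add_le_add ((tp_le_card Ep A').trans hcomplete.ge) (tn_antitone En hgen)
end

section
/- Let three hypotheses have entailed sets A₁, A₂, A₃ and sizes s₁, s₂, s₃ ∈ ℕ, where A₃ is a specialization of A₁ (A₃ ⊆ A₁). If, as integers, S_MDL(A₂,s₂) − S_MDL(A₁,s₁) > fp(A₁) − (s₃ − s₁), then S_MDL(A₂,s₂) > S_MDL(A₃,s₃). (Sound specialization-pruning constraint under the MDL score.) -/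
open Finset

variable {α : Type*}

section Scores

variable [DecidableEq α]

theorem tp_mono_s12 (Ep : Finset α) {A B : Finset α} (h : A ⊆ B) : tp Ep A ≤ tp Ep B :=
  card_le_card (inter_subset_inter_right h)

theorem tn_add_fpScore (En A : Finset α) : tn En A + fpScore En A = En.card := by
  rw [tn, fpScore, inter_comm, card_sdiff_add_card_inter]

theorem tn_le_card (En A : Finset α) : tn En A ≤ En.card :=
  card_le_card sdiff_subset

theorem tn_le_tn_add_fpScore (En A B : Finset α) : tn En A ≤ tn En B + fpScore En B :=
  (tn_add_fpScore En B).symm ▸ tn_le_card En A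

/-- A specialization of `B` keeps at most the positives of `B` and at best rejects all of
`B`'s false positives. -/
theorem sMdl_le_of_subset (Ep En : Finset α) {A B : Finset α} (h : A ⊆ B) (s t : ℕ) :
    sMdl Ep En A t ≤ sMdl Ep En B s + fpScore En B - ((t : ℤ) - s) := by
  have htp := tp_mono_s12 Ep h
  have htn := tn_le_tn_add_fpScore En A B
  simp only [sMdl]
  omega

end Scores

theorem mdl_specialization_pruning [DecidableEq α] (Ep En A1 A2 A3 : Finset α)
    (s1 s2 s3 : ℕ) (hspec : A3 ⊆ A1)
    (h : sMdl Ep En A2 s2 - sMdl Ep En A1 s1 > (fpScore En A1 : ℤ) - ((s3 : ℤ) - (s1 : ℤ))) :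
    sMdl Ep En A2 s2 > sMdl Ep En A3 s3 := by
  have hbound := sMdl_le_of_subset Ep En hspec s1 s3
  linarith
end
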